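/- Let λ : (0,∞) → ℂ be continuous with Re λ(ρ) ≤ −cρ for all ρ > 0 and some c > 0, and suppose additionally that |λ(ρ)| ≤ C'ρ for all ρ > 0. Then for every f ∈ L²(0,∞), provided the integral converges, the function x ↦ ∫₀^∞ e^{λ(ρ)x} f(ρ) dρ satisfies ∫₀^∞ |∫₀^∞ e^{λ(ρ)x} f(ρ) dρ|² dx ≤ C(c)‖f‖²_{L²(0,∞)} for a constant C(c) depending only on c. -/

import Mathlib

open MeasureTheory

open Set
open scoped ENNReal

noncomputable def K17 (c x ρ : ℝ) : ℝ≥0∞ := ENNReal.ofReal (Real.exp (-(c * x * ρ)))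

lemma K17_symm (c x ρ : ℝ) : K17 c x ρ = K17 c ρ x := by
  unfold K17; rw [mul_right_comm]

lemma K17_ne_zero (c x ρ : ℝ) : K17 c x ρ ≠ 0 :=
  (ENNReal.ofReal_pos.2 (Real.exp_pos _)).ne'

lemma K17_ne_top (c x ρ : ℝ) : K17 c x ρ ≠ ⊤ := ENNReal.ofReal_ne_top

lemma K17_measurable (c x : ℝ) : Measurable fun ρ => K17 c x ρ :=
  ENNReal.measurable_ofReal.comp (Real.measurable_exp.comp
    ((measurable_id.const_mul (c * x)).neg))

lemma aux_integrable17 {s b : ℝ} (hs : 0 < s) (hb : 0 < b) :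
    IntegrableOn (fun t : ℝ => t ^ (s - 1) * Real.exp (-(b * t))) (Set.Ioi 0) := by
  have h0 : IntegrableOn (fun x : ℝ => Real.exp (-x) * x ^ (s - 1)) (Set.Ioi 0) :=
    Real.GammaIntegral_convergent hs
  have h1 : IntegrableOn (fun x : ℝ => Real.exp (-(b * x)) * (b * x) ^ (s - 1)) (Set.Ioi 0) := by
    have := (integrableOn_Ioi_comp_mul_left_iff
      (fun x : ℝ => Real.exp (-x) * x ^ (s - 1)) 0 hb).mpr (by simpa using h0)
    simpa using this
  have h2 := h1.const_mul (b ^ (1 - s))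
  refine (integrableOn_congr_fun (fun x hx => ?_) measurableSet_Ioi).mp h2
  have hx0 : (0:ℝ) < x := hx
  calc b ^ (1-s) * (Real.exp (-(b*x)) * (b*x) ^ (s-1))
      = (b ^ (1-s) * b ^ (s-1)) * (x ^ (s-1) * Real.exp (-(b*x))) := by
        rw [Real.mul_rpow hb.le hx0.le]; ring
    _ = x ^ (s-1) * Real.exp (-(b*x)) := by
        rw [← Real.rpow_add hb]; norm_num

lemma aux_lint17 {s b : ℝ} (hs : 0 < s) (hb : 0 < b) :
    ∫⁻ t in Set.Ioi 0, ENNReal.ofReal (Real.exp (-(b * t))) * (ENNReal.ofReal t) ^ (s - 1)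
      = ENNReal.ofReal ((1 / b) ^ s * Real.Gamma s) := by
  have hnn : 0 ≤ᵐ[volume.restrict (Set.Ioi (0:ℝ))]
      fun t : ℝ => t ^ (s - 1) * Real.exp (-(b * t)) := by
    refine (ae_restrict_iff' measurableSet_Ioi).2 (Filter.Eventually.of_forall fun t ht => ?_)
    have : (0:ℝ) < t := ht
    positivity
  have h := ofReal_integral_eq_lintegral_ofReal (aux_integrable17 hs hb) hnn
  rw [Real.integral_rpow_mul_exp_neg_mul_Ioi hs hb] at h
  rw [h]
  refine setLIntegral_congr_fun measurableSet_Ioi (fun t ht => ?_)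
  have ht0 : (0:ℝ) < t := ht
  rw [ENNReal.ofReal_mul (by positivity), ENNReal.ofReal_rpow_of_pos ht0, mul_comm]

lemma aux_half17 {b : ℝ} (hb : 0 < b) :
    ∫⁻ t in Set.Ioi 0, ENNReal.ofReal (Real.exp (-(b * t))) * (ENNReal.ofReal t) ^ (-(1/2) : ℝ)
      = ENNReal.ofReal ((1/b) ^ ((1/2):ℝ) * Real.sqrt Real.pi) := by
  have h := aux_lint17 (by norm_num : (0:ℝ) < 1/2) hb
  rw [show ((1:ℝ)/2 - 1) = -(1/2) by norm_num, Real.Gamma_one_half_eq] at h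
  exact h

lemma aux_half17' {b t : ℝ} (hb : 0 < b) (ht : 0 < t) :
    ENNReal.ofReal ((1/(b*t)) ^ ((1/2):ℝ) * Real.sqrt Real.pi)
      = ENNReal.ofReal ((1/b) ^ ((1/2):ℝ) * Real.sqrt Real.pi)
        * (ENNReal.ofReal t) ^ (-(1/2):ℝ) := by
  have h1 : (1/(b*t)) ^ ((1/2):ℝ) = (1/b) ^ ((1/2):ℝ) * t ^ (-(1/2):ℝ) := by
    rw [one_div, mul_inv, Real.mul_rpow (by positivity) (by positivity),
      Real.inv_rpow ht.le, ← Real.rpow_neg ht.le, one_div]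
    norm_num
  rw [h1, mul_right_comm, ENNReal.ofReal_mul (by positivity),
    ENNReal.ofReal_rpow_of_pos ht]

lemma key17 {c : ℝ} (hc : 0 < c) {G : ℝ → ℝ≥0∞}
    (hG : AEMeasurable G (volume.restrict (Set.Ioi 0))) :
    ∫⁻ x in Set.Ioi 0, (∫⁻ ρ in Set.Ioi 0, K17 c x ρ * G ρ) ^ (2:ℝ)
      ≤ ENNReal.ofReal (Real.pi / c) * ∫⁻ ρ in Set.Ioi 0, (G ρ) ^ (2:ℝ) := by
  set D := ENNReal.ofReal ((1/c) ^ ((1/2):ℝ) * Real.sqrt Real.pi) with hD_def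
  have hDtop : D ≠ ⊤ := ENNReal.ofReal_ne_top
  have hD2 : D * D = ENNReal.ofReal (Real.pi / c) := by
    rw [hD_def, ← ENNReal.ofReal_mul (by positivity)]
    congr 1
    have h1 : (1/c:ℝ) ^ ((1/2):ℝ) * (1/c) ^ ((1/2):ℝ) = 1/c := by
      rw [← Real.rpow_add (by positivity)]; norm_num
    calc ((1/c:ℝ) ^ ((1/2):ℝ) * Real.sqrt Real.pi) * ((1/c) ^ ((1/2):ℝ) * Real.sqrt Real.pi)
        = ((1/c:ℝ) ^ ((1/2):ℝ) * (1/c) ^ ((1/2):ℝ)) * (Real.sqrt Real.pi * Real.sqrt Real.pi) := by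
          ring
      _ = (1/c) * Real.pi := by rw [h1, Real.mul_self_sqrt Real.pi_pos.le]
      _ = Real.pi / c := by ring
  -- Cauchy-Schwarz pointwise in x
  have hCS : ∀ x : ℝ, 0 < x →
      (∫⁻ ρ in Set.Ioi 0, K17 c x ρ * G ρ) ^ (2:ℝ)
        ≤ (D * (ENNReal.ofReal x) ^ (-(1/2):ℝ)) *
          ∫⁻ ρ in Set.Ioi 0,
            K17 c x ρ * (ENNReal.ofReal ρ) ^ ((1/2):ℝ) * (G ρ) ^ (2:ℝ) := by
    intro x hx
    set u : ℝ → ℝ≥0∞ :=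
      fun ρ => (K17 c x ρ) ^ ((1/2):ℝ) * (ENNReal.ofReal ρ) ^ (-(1/4):ℝ) with hu_def
    set v : ℝ → ℝ≥0∞ :=
      fun ρ => (K17 c x ρ) ^ ((1/2):ℝ) * (ENNReal.ofReal ρ) ^ ((1/4):ℝ) * G ρ with hv_def
    have hum : AEMeasurable u (volume.restrict (Set.Ioi 0)) :=
      (((K17_measurable c x).pow_const _).mul
        (ENNReal.measurable_ofReal.pow_const _)).aemeasurable
    have hvm : AEMeasurable v (volume.restrict (Set.Ioi 0)) :=
      ((((K17_measurable c x).pow_const _).mul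
        (ENNReal.measurable_ofReal.pow_const _)).aemeasurable).mul hG
    have h22 : Real.HolderConjugate 2 2 := Real.HolderConjugate.two_two
    have hH := ENNReal.lintegral_mul_le_Lp_mul_Lq (volume.restrict (Set.Ioi 0)) h22 hum hvm
    have e0 : ∫⁻ ρ in Set.Ioi 0, K17 c x ρ * G ρ = ∫⁻ ρ in Set.Ioi 0, (u * v) ρ := by
      refine setLIntegral_congr_fun measurableSet_Ioi
        (fun ρ hρ => ?_)
      have hρ0 : (0:ℝ) < ρ := hρ
      have e1 : (K17 c x ρ) ^ ((1/2):ℝ) * (K17 c x ρ) ^ ((1/2):ℝ) = K17 c x ρ := by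
        rw [← ENNReal.rpow_add _ _ (K17_ne_zero c x ρ) (K17_ne_top c x ρ)]
        norm_num
      have e2 : (ENNReal.ofReal ρ) ^ (-(1/4):ℝ) * (ENNReal.ofReal ρ) ^ ((1/4):ℝ) = 1 := by
        rw [← ENNReal.rpow_add _ _ (ENNReal.ofReal_pos.2 hρ0).ne' ENNReal.ofReal_ne_top]
        norm_num
      show K17 c x ρ * G ρ = u ρ * v ρ
      calc K17 c x ρ * G ρ
          = ((K17 c x ρ) ^ ((1/2):ℝ) * (K17 c x ρ) ^ ((1/2):ℝ)) *
            ((ENNReal.ofReal ρ) ^ (-(1/4):ℝ) * (ENNReal.ofReal ρ) ^ ((1/4):ℝ)) * G ρ := by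
            rw [e1, e2]; ring
        _ = u ρ * v ρ := by rw [hu_def, hv_def]; ring
    have e3 : ∫⁻ ρ in Set.Ioi 0, u ρ ^ (2:ℝ) = D * (ENNReal.ofReal x) ^ (-(1/2):ℝ) := by
      have eq1 : ∀ ρ : ℝ, u ρ ^ (2:ℝ)
          = ENNReal.ofReal (Real.exp (-(c * x * ρ))) * (ENNReal.ofReal ρ) ^ (-(1/2):ℝ) := by
        intro ρ
        rw [hu_def]
        show ((K17 c x ρ) ^ ((1/2):ℝ) * (ENNReal.ofReal ρ) ^ (-(1/4):ℝ)) ^ (2:ℝ) = _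
        rw [ENNReal.mul_rpow_of_nonneg _ _ (by norm_num), ← ENNReal.rpow_mul,
          ← ENNReal.rpow_mul]
        norm_num
        rfl
      rw [lintegral_congr eq1]
      have : ∫⁻ ρ in Set.Ioi 0,
          ENNReal.ofReal (Real.exp (-(c * x * ρ))) * (ENNReal.ofReal ρ) ^ (-(1/2):ℝ)
          = ENNReal.ofReal ((1/(c*x)) ^ ((1/2):ℝ) * Real.sqrt Real.pi) :=
        aux_half17 (mul_pos hc hx)
      rw [this, aux_half17' hc hx, hD_def]
    have e4 : ∫⁻ ρ in Set.Ioi 0, v ρ ^ (2:ℝ)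
        = ∫⁻ ρ in Set.Ioi 0,
            K17 c x ρ * (ENNReal.ofReal ρ) ^ ((1/2):ℝ) * (G ρ) ^ (2:ℝ) := by
      refine lintegral_congr fun ρ => ?_
      rw [hv_def]
      show ((K17 c x ρ) ^ ((1/2):ℝ) * (ENNReal.ofReal ρ) ^ ((1/4):ℝ) * G ρ) ^ (2:ℝ) = _
      rw [ENNReal.mul_rpow_of_nonneg _ _ (by norm_num),
        ENNReal.mul_rpow_of_nonneg _ _ (by norm_num), ← ENNReal.rpow_mul,
        ← ENNReal.rpow_mul]
      norm_num
    calc (∫⁻ ρ in Set.Ioi 0, K17 c x ρ * G ρ) ^ (2:ℝ)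
        ≤ ((∫⁻ ρ in Set.Ioi 0, u ρ ^ (2:ℝ)) ^ ((1:ℝ)/2)
            * (∫⁻ ρ in Set.Ioi 0, v ρ ^ (2:ℝ)) ^ ((1:ℝ)/2)) ^ (2:ℝ) := by
          rw [e0]
          exact ENNReal.rpow_le_rpow hH (by norm_num)
      _ = (∫⁻ ρ in Set.Ioi 0, u ρ ^ (2:ℝ)) * (∫⁻ ρ in Set.Ioi 0, v ρ ^ (2:ℝ)) := by
          rw [ENNReal.mul_rpow_of_nonneg _ _ (by norm_num), ← ENNReal.rpow_mul,
            ← ENNReal.rpow_mul]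
          norm_num
      _ = (D * (ENNReal.ofReal x) ^ (-(1/2):ℝ)) *
          ∫⁻ ρ in Set.Ioi 0,
            K17 c x ρ * (ENNReal.ofReal ρ) ^ ((1/2):ℝ) * (G ρ) ^ (2:ℝ) := by
          rw [e3, e4]
  -- step 1 : bound by iterated integral
  have step1 : (∫⁻ x in Set.Ioi 0, (∫⁻ ρ in Set.Ioi 0, K17 c x ρ * G ρ) ^ (2:ℝ))
      ≤ D * ∫⁻ x in Set.Ioi 0, ∫⁻ ρ in Set.Ioi 0,
          (ENNReal.ofReal x) ^ (-(1/2):ℝ) *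
            (K17 c x ρ * (ENNReal.ofReal ρ) ^ ((1/2):ℝ) * (G ρ) ^ (2:ℝ)) := by
    rw [← lintegral_const_mul' D _ hDtop]
    refine lintegral_mono_ae ((ae_restrict_iff' measurableSet_Ioi).2
      (Filter.Eventually.of_forall fun x hx => ?_))
    have hx0 : (0:ℝ) < x := hx
    have hxtop : (ENNReal.ofReal x) ^ (-(1/2):ℝ) ≠ ⊤ := by
      rw [ENNReal.ofReal_rpow_of_pos hx0]
      exact ENNReal.ofReal_ne_top
    calc (∫⁻ ρ in Set.Ioi 0, K17 c x ρ * G ρ) ^ (2:ℝ)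
        ≤ (D * (ENNReal.ofReal x) ^ (-(1/2):ℝ)) *
          ∫⁻ ρ in Set.Ioi 0,
            K17 c x ρ * (ENNReal.ofReal ρ) ^ ((1/2):ℝ) * (G ρ) ^ (2:ℝ) := hCS x hx0
      _ = D * ∫⁻ ρ in Set.Ioi 0,
            (ENNReal.ofReal x) ^ (-(1/2):ℝ) *
              (K17 c x ρ * (ENNReal.ofReal ρ) ^ ((1/2):ℝ) * (G ρ) ^ (2:ℝ)) := by
          rw [mul_assoc, ← lintegral_const_mul' _ _ hxtop]
  -- step 2 : swap
  have hjoint : AEMeasurable (fun p : ℝ × ℝ =>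
      (ENNReal.ofReal p.1) ^ (-(1/2):ℝ) *
        (K17 c p.1 p.2 * (ENNReal.ofReal p.2) ^ ((1/2):ℝ) * (G p.2) ^ (2:ℝ)))
      ((volume.restrict (Set.Ioi 0)).prod (volume.restrict (Set.Ioi 0))) := by
    have m1 : Measurable fun p : ℝ × ℝ => (ENNReal.ofReal p.1) ^ (-(1/2):ℝ) :=
      (ENNReal.measurable_ofReal.comp measurable_fst).pow_const _
    have m2 : Measurable fun p : ℝ × ℝ => K17 c p.1 p.2 := by
      unfold K17
      exact ENNReal.measurable_ofReal.comp (Real.measurable_exp.comp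
        (((measurable_fst.const_mul c).mul measurable_snd).neg))
    have m3 : Measurable fun p : ℝ × ℝ => (ENNReal.ofReal p.2) ^ ((1/2):ℝ) :=
      (ENNReal.measurable_ofReal.comp measurable_snd).pow_const _
    have m4 : AEMeasurable (fun p : ℝ × ℝ => (G p.2) ^ (2:ℝ))
        ((volume.restrict (Set.Ioi 0)).prod (volume.restrict (Set.Ioi 0))) :=
      hG.comp_snd.pow_const _
    exact m1.aemeasurable.mul (((m2.aemeasurable.mul m3.aemeasurable)).mul m4)
  have step2 : ∫⁻ x in Set.Ioi 0, ∫⁻ ρ in Set.Ioi 0,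
        (ENNReal.ofReal x) ^ (-(1/2):ℝ) *
          (K17 c x ρ * (ENNReal.ofReal ρ) ^ ((1/2):ℝ) * (G ρ) ^ (2:ℝ))
      = ∫⁻ ρ in Set.Ioi 0, ∫⁻ x in Set.Ioi 0,
        (ENNReal.ofReal x) ^ (-(1/2):ℝ) *
          (K17 c x ρ * (ENNReal.ofReal ρ) ^ ((1/2):ℝ) * (G ρ) ^ (2:ℝ)) :=
    lintegral_lintegral_swap hjoint
  -- step 3 : inner integral in x
  have step3 : ∀ ρ : ℝ, 0 < ρ →
      (∫⁻ x in Set.Ioi 0,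
        (ENNReal.ofReal x) ^ (-(1/2):ℝ) *
          (K17 c x ρ * (ENNReal.ofReal ρ) ^ ((1/2):ℝ) * (G ρ) ^ (2:ℝ)))
      = D * (G ρ) ^ (2:ℝ) := by
    intro ρ hρ
    have hmeas : Measurable fun x : ℝ =>
        (ENNReal.ofReal x) ^ (-(1/2):ℝ) * K17 c x ρ :=
      (ENNReal.measurable_ofReal.pow_const _).mul
        (by unfold K17
            exact ENNReal.measurable_ofReal.comp (Real.measurable_exp.comp
              (((measurable_id.const_mul c).mul_const ρ).neg)))
    have rear : (fun x : ℝ =>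
        (ENNReal.ofReal x) ^ (-(1/2):ℝ) *
          (K17 c x ρ * (ENNReal.ofReal ρ) ^ ((1/2):ℝ) * (G ρ) ^ (2:ℝ)))
        = fun x : ℝ => ((ENNReal.ofReal ρ) ^ ((1/2):ℝ) * (G ρ) ^ (2:ℝ)) *
            ((ENNReal.ofReal x) ^ (-(1/2):ℝ) * K17 c x ρ) := funext fun x => by ring
    rw [rear, lintegral_const_mul _ hmeas]
    have inner : (∫⁻ x in Set.Ioi 0, (ENNReal.ofReal x) ^ (-(1/2):ℝ) * K17 c x ρ)
        = D * (ENNReal.ofReal ρ) ^ (-(1/2):ℝ) := by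
      have congr1 : (fun x : ℝ => (ENNReal.ofReal x) ^ (-(1/2):ℝ) * K17 c x ρ)
          = fun x : ℝ => ENNReal.ofReal (Real.exp (-(c * ρ * x))) *
              (ENNReal.ofReal x) ^ (-(1/2):ℝ) := funext fun x => by
        rw [K17_symm]; exact mul_comm _ _
      rw [congr1, aux_half17 (mul_pos hc hρ), aux_half17' hc hρ, hD_def]
    rw [inner]
    have hρ1 : (ENNReal.ofReal ρ) ^ ((1/2):ℝ) * (ENNReal.ofReal ρ) ^ (-(1/2):ℝ) = 1 := by
      rw [← ENNReal.rpow_add _ _ (ENNReal.ofReal_pos.2 hρ).ne' ENNReal.ofReal_ne_top]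
      norm_num
    calc (ENNReal.ofReal ρ) ^ ((1/2):ℝ) * (G ρ) ^ (2:ℝ) * (D * (ENNReal.ofReal ρ) ^ (-(1/2):ℝ))
        = ((ENNReal.ofReal ρ) ^ ((1/2):ℝ) * (ENNReal.ofReal ρ) ^ (-(1/2):ℝ)) *
            (D * (G ρ) ^ (2:ℝ)) := by ring
      _ = D * (G ρ) ^ (2:ℝ) := by rw [hρ1, one_mul]
  -- assemble
  calc ∫⁻ x in Set.Ioi 0, (∫⁻ ρ in Set.Ioi 0, K17 c x ρ * G ρ) ^ (2:ℝ)
      ≤ D * ∫⁻ x in Set.Ioi 0, ∫⁻ ρ in Set.Ioi 0,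
          (ENNReal.ofReal x) ^ (-(1/2):ℝ) *
            (K17 c x ρ * (ENNReal.ofReal ρ) ^ ((1/2):ℝ) * (G ρ) ^ (2:ℝ)) := step1
    _ = D * ∫⁻ ρ in Set.Ioi 0, D * (G ρ) ^ (2:ℝ) := by
        rw [step2]
        congr 1
        exact setLIntegral_congr_fun measurableSet_Ioi
          (fun ρ hρ => step3 ρ hρ)
    _ = ENNReal.ofReal (Real.pi / c) * ∫⁻ ρ in Set.Ioi 0, (G ρ) ^ (2:ℝ) := by
        rw [lintegral_const_mul' _ _ hDtop, ← mul_assoc, hD2]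

theorem stmt17 (c : ℝ) (hc : 0 < c) :
    ∃ C : ℝ, 0 < C ∧ ∀ C' : ℝ, 0 < C' → ∀ (lam : ℝ → ℂ) (f : ℝ → ℂ),
      ContinuousOn lam (Set.Ioi 0) →
      (∀ ρ : ℝ, 0 < ρ → (lam ρ).re ≤ -c * ρ) →
      (∀ ρ : ℝ, 0 < ρ → ‖lam ρ‖ ≤ C' * ρ) →
      IntegrableOn (fun ρ => ‖f ρ‖ ^ 2) (Set.Ioi 0) →
      (∀ x : ℝ, 0 < x →
        IntegrableOn (fun ρ => Complex.exp (lam ρ * (x:ℂ)) * f ρ) (Set.Ioi 0)) →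
      (∫ x in Set.Ioi (0:ℝ), ‖∫ ρ in Set.Ioi (0:ℝ), Complex.exp (lam ρ * (x:ℂ)) * f ρ‖ ^ 2)
        ≤ C * ∫ ρ in Set.Ioi (0:ℝ), ‖f ρ‖ ^ 2 := by
  refine ⟨Real.pi / c, by positivity, ?_⟩
  intro C' hC' lam f hcont hre hbnd hf2 hInt
  have hRHSnn : 0 ≤ ∫ ρ in Set.Ioi (0:ℝ), ‖f ρ‖ ^ 2 :=
    integral_nonneg fun ρ => by positivity
  -- measurability of ‖f‖
  have hnormf : AEMeasurable (fun ρ => ‖f ρ‖) (volume.restrict (Set.Ioi 0)) := by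
    have h2 := hf2.aestronglyMeasurable.aemeasurable
    have h3 : AEMeasurable (fun ρ => Real.sqrt (‖f ρ‖ ^ 2)) (volume.restrict (Set.Ioi 0)) :=
      Real.continuous_sqrt.measurable.comp_aemeasurable h2
    exact h3.congr (Filter.Eventually.of_forall fun ρ => by
      simp [Real.sqrt_sq (norm_nonneg (f ρ))])
  have hG : AEMeasurable (fun ρ => ENNReal.ofReal ‖f ρ‖) (volume.restrict (Set.Ioi 0)) :=
    ENNReal.measurable_ofReal.comp_aemeasurable hnormf
  have hlam : AEMeasurable lam (volume.restrict (Set.Ioi 0)) :=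
    hcont.aemeasurable measurableSet_Ioi
  -- f is a.e. strongly measurable
  have hfae : AEStronglyMeasurable f (volume.restrict (Set.Ioi 0)) := by
    have h1 := (hInt 1 one_pos).aestronglyMeasurable
    have h2 : AEMeasurable (fun ρ => Complex.exp (-(lam ρ * ((1:ℝ):ℂ))))
        (volume.restrict (Set.Ioi 0)) :=
      Complex.measurable_exp.comp_aemeasurable (hlam.mul_const _).neg
    have h3 := h2.aestronglyMeasurable.mul h1
    refine h3.congr (Filter.Eventually.of_forall fun ρ => ?_)
    simp only [Pi.mul_apply]
    rw [← mul_assoc, ← Complex.exp_add, neg_add_cancel, Complex.exp_zero, one_mul]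
  -- F is a.e. strongly measurable
  have hFm : AEStronglyMeasurable
      (fun x : ℝ => ∫ ρ in Set.Ioi (0:ℝ), Complex.exp (lam ρ * (x:ℂ)) * f ρ)
      (volume.restrict (Set.Ioi 0)) := by
    have hj : AEStronglyMeasurable
        (fun p : ℝ × ℝ => Complex.exp (lam p.2 * ((p.1:ℝ):ℂ)) * f p.2)
        ((volume.restrict (Set.Ioi 0)).prod (volume.restrict (Set.Ioi 0))) := by
      have h1 : AEMeasurable (fun p : ℝ × ℝ => lam p.2)
          ((volume.restrict (Set.Ioi 0)).prod (volume.restrict (Set.Ioi 0))) := hlam.comp_snd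
      have h2 : AEMeasurable (fun p : ℝ × ℝ => ((p.1:ℝ):ℂ))
          ((volume.restrict (Set.Ioi 0)).prod (volume.restrict (Set.Ioi 0))) :=
        (Complex.measurable_ofReal.comp measurable_fst).aemeasurable
      exact ((Complex.measurable_exp.comp_aemeasurable
        (h1.mul h2)).aestronglyMeasurable).mul hfae.comp_snd
    exact hj.integral_prod_right'
  -- pointwise bound
  have h1 : ∀ x : ℝ, 0 < x →
      ENNReal.ofReal ‖∫ ρ in Set.Ioi (0:ℝ), Complex.exp (lam ρ * (x:ℂ)) * f ρ‖
        ≤ ∫⁻ ρ in Set.Ioi 0, K17 c x ρ * ENNReal.ofReal ‖f ρ‖ := by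
    intro x hx
    rw [ofReal_norm]
    refine le_trans (enorm_integral_le_lintegral_enorm _) ?_
    refine lintegral_mono_ae ((ae_restrict_iff' measurableSet_Ioi).2
      (Filter.Eventually.of_forall fun ρ hρ => ?_))
    have hρ0 : (0:ℝ) < ρ := hρ
    rw [← ofReal_norm, norm_mul, ENNReal.ofReal_mul (norm_nonneg _)]
    have hexp : ‖Complex.exp (lam ρ * (x:ℂ))‖ ≤ Real.exp (-(c * x * ρ)) := by
      rw [Complex.norm_exp]
      apply Real.exp_le_exp.2
      have hre' : (lam ρ * (x:ℂ)).re = (lam ρ).re * x := by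
        simp [Complex.mul_re]
      rw [hre']
      calc (lam ρ).re * x ≤ (-c * ρ) * x :=
            mul_le_mul_of_nonneg_right (hre ρ hρ0) hx.le
        _ = -(c * x * ρ) := by ring
    exact mul_le_mul' (ENNReal.ofReal_le_ofReal hexp) le_rfl
  -- conclude
  rw [integral_eq_lintegral_of_nonneg_ae
    (Filter.Eventually.of_forall fun x => by positivity)
    ((hFm.norm.aemeasurable.pow_const 2).aestronglyMeasurable)]
  refine ENNReal.toReal_le_of_le_ofReal (by positivity) ?_
  calc ∫⁻ x : ℝ in Set.Ioi 0,
        ENNReal.ofReal (‖∫ ρ in Set.Ioi (0:ℝ), Complex.exp (lam ρ * (x:ℂ)) * f ρ‖ ^ 2)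
      = ∫⁻ x : ℝ in Set.Ioi 0,
        (ENNReal.ofReal ‖∫ ρ in Set.Ioi (0:ℝ), Complex.exp (lam ρ * (x:ℂ)) * f ρ‖) ^ (2:ℝ) := by
        refine lintegral_congr fun x => ?_
        rw [ENNReal.ofReal_pow (norm_nonneg _), ← ENNReal.rpow_natCast]
        norm_num
    _ ≤ ∫⁻ x : ℝ in Set.Ioi 0,
        (∫⁻ ρ in Set.Ioi 0, K17 c x ρ * ENNReal.ofReal ‖f ρ‖) ^ (2:ℝ) := by
        refine lintegral_mono_ae ((ae_restrict_iff' measurableSet_Ioi).2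
          (Filter.Eventually.of_forall fun x hx => ?_))
        exact ENNReal.rpow_le_rpow (h1 x hx) (by norm_num)
    _ ≤ ENNReal.ofReal (Real.pi / c) *
        ∫⁻ ρ in Set.Ioi 0, (ENNReal.ofReal ‖f ρ‖) ^ (2:ℝ) := key17 hc hG
    _ = ENNReal.ofReal (Real.pi / c) *
        ENNReal.ofReal (∫ ρ in Set.Ioi (0:ℝ), ‖f ρ‖ ^ 2) := by
        congr 1
        rw [ofReal_integral_eq_lintegral_ofReal hf2
          (Filter.Eventually.of_forall fun ρ => by positivity)]
        refine lintegral_congr fun ρ => ?_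
        rw [ENNReal.ofReal_pow (norm_nonneg _), ← ENNReal.rpow_natCast]
        norm_num
    _ = ENNReal.ofReal (Real.pi / c * ∫ ρ in Set.Ioi (0:ℝ), ‖f ρ‖ ^ 2) :=
        (ENNReal.ofReal_mul (by positivity)).symm
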